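/- arXiv:1008.0227 — 2 statements merged into one kernel-verified Lean document; each statement's English description precedes it below -/
import Mathlib

section
/- Let f : V → (0,∞) be any positive weight function, m = min_{v∈V} f(v), M = max_{v∈V} f(v), ξ = M/m, and suppose q_v > 0 for all v and θ := min_{v∈V} { q_v f(v) − Σ_{w∈N_v} q_w (λ_w/(1+λ_w)) f(w) } > 0. Then for every initial feasible schedule x and every t ≥ 0, ||μ_{x,t} − π||_var ≤ min{1, (1 − θ/M)^t · nξ}; consequently the mixing time of the parallel Glauber dynamics satisfies T_mix ≤ ⌈(M/θ) log(nξe)⌉. -/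
open Finset

variable {V : Type*} [Fintype V] [DecidableEq V]

/-- A finite set of vertices is independent in `G`. -/
def IsInd (G : SimpleGraph V) [DecidableRel G.Adj] (s : Finset V) : Prop :=
  ∀ v ∈ s, ∀ w ∈ s, ¬ G.Adj v w

instance (G : SimpleGraph V) [DecidableRel G.Adj] (s : Finset V) :
    Decidable (IsInd G s) := by
  unfold IsInd; infer_instance

/-- `q_v`: probability that vertex `v` belongs to the decision schedule. -/
noncomputable def qVert (q : Finset V → ℝ) (v : V) : ℝ :=
  ∑ m ∈ univ.filter (fun m => v ∈ m), q m

/-- Per-vertex factor of the transition probability of the parallel Glauber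
dynamics, given current schedule `σ`, decision schedule `m`, next schedule `σ'`. -/
noncomputable def stepFactor (G : SimpleGraph V) [DecidableRel G.Adj] (lam : V → ℝ)
    (σ m σ' : Finset V) (v : V) : ℝ :=
  if v ∈ m then
    (if ∃ w ∈ σ, G.Adj v w then (if v ∈ σ' then 0 else 1)
     else (if v ∈ σ' then lam v / (1 + lam v) else 1 / (1 + lam v)))
  else (if (v ∈ σ' ↔ v ∈ σ) then 1 else 0)

/-- Transition matrix of the parallel Glauber dynamics. -/
noncomputable def pgdP (G : SimpleGraph V) [DecidableRel G.Adj] (lam : V → ℝ)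
    (q : Finset V → ℝ) (σ σ' : Finset V) : ℝ :=
  ∑ m : Finset V, q m * ∏ v : V, stepFactor G lam σ m σ' v

/-- Distribution at time `t` of a Markov chain with transition matrix `P`
started at state `x`. -/
noncomputable def chainDist {S : Type*} [Fintype S] [DecidableEq S]
    (P : S → S → ℝ) (x : S) : ℕ → S → ℝ
  | 0 => fun s => if s = x then 1 else 0
  | t + 1 => fun s => ∑ s' : S, chainDist P x t s' * P s' s

/-- `t`-step transition probabilities. -/
noncomputable def chainPow {S : Type*} [Fintype S] [DecidableEq S]
    (P : S → S → ℝ) : ℕ → S → S → ℝ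
  | 0 => fun x y => if x = y then 1 else 0
  | t + 1 => fun x y => ∑ z : S, chainPow P t x z * P z y

/-- Total variation distance between two distributions on a finite set. -/
noncomputable def tvDist {S : Type*} [Fintype S] (μ ν : S → ℝ) : ℝ :=
  (1 / 2) * ∑ s : S, |μ s - ν s|

/-- The product-form distribution on independent sets with fugacities `lam`. -/
noncomputable def prodForm (G : SimpleGraph V) [DecidableRel G.Adj]
    (lam : V → ℝ) (σ : Finset V) : ℝ :=
  if IsInd G σ then
    (∏ v ∈ σ, lam v) / (∑ σ' ∈ univ.filter (fun s => IsInd G s), ∏ v ∈ σ', lam v)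
  else 0

/-- Mixing time: the maximum over starting states in `states` of the first time
the distribution is within `1/e` of `π` in total variation. -/
noncomputable def mixTime {S : Type*} [Fintype S] [DecidableEq S]
    (P : S → S → ℝ) (π : S → ℝ) (states : Finset S) : ℕ :=
  states.sup fun x => sInf {t : ℕ | tvDist (chainDist P x t) π ≤ 1 / Real.exp 1}

open scoped symmDiff

/-!
A step of the dynamics is a deterministic function of its noise: the decision schedule `m` and
one coin per vertex. Running two copies with the same noise couples them, and a disagreement at
`v` after the step needs either `v ∉ m` and a disagreement at `v` before, or `v ∈ m`, a successful
coin, and a disagreeing neighbour (exactly one copy is blocked). Summing with the weights `f`, the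
condition `θ > 0` makes the weighted Hamming distance contract by `1 - θ / M` in expectation, so
after `t` steps two copies differ with probability at most `(1 - θ / M) ^ t · n M / m`. The product
form `π` satisfies detailed balance, hence is stationary, and averaging the starting point of the
second copy over `π` gives the bound; the mixing time follows from `(1 - c) ^ N ≤ exp (-c N)`.
-/

section MarkovChain

variable {S : Type*} [Fintype S] [DecidableEq S] (P : S → S → ℝ)

lemma chainDist_succ_apply (x : S) (t : ℕ) (s : S) :
    chainDist P x (t + 1) s = ∑ s', chainDist P x t s' * P s' s := rfl

lemma chainDist_nonneg (hP : ∀ a b, 0 ≤ P a b) (x : S) (t : ℕ) (s : S) :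
    0 ≤ chainDist P x t s := by
  induction t generalizing s with
  | zero => simp only [chainDist]; positivity
  | succ t ih => exact sum_nonneg fun s' _ => mul_nonneg (ih s') (hP s' s)

lemma sum_chainDist_mul_le_pow {D : S → ℝ} {c : ℝ} (hP : ∀ a b, 0 ≤ P a b) (hc : 0 ≤ c)
    (hD : ∀ a, ∑ b, P a b * D b ≤ c * D a) (x : S) (t : ℕ) :
    ∑ s, chainDist P x t s * D s ≤ c ^ t * D x := by
  induction t with
  | zero => simp [chainDist]
  | succ t ih =>
    calc ∑ s, chainDist P x (t + 1) s * D s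
        = ∑ s', chainDist P x t s' * ∑ s, P s' s * D s := by
          simp only [chainDist_succ_apply, sum_mul, mul_sum, mul_assoc]
          exact sum_comm
      _ ≤ ∑ s', chainDist P x t s' * (c * D s') :=
          sum_le_sum fun s' _ => mul_le_mul_of_nonneg_left (hD s') (chainDist_nonneg P hP x t s')
      _ = c * ∑ s', chainDist P x t s' * D s' := by
          rw [mul_sum]; exact sum_congr rfl fun _ _ => by ring
      _ ≤ c ^ (t + 1) * D x := by
          rw [pow_succ', mul_assoc]; exact mul_le_mul_of_nonneg_left ih hc

lemma sum_chainDist (hP : ∀ a, ∑ b, P a b = 1) (x : S) (t : ℕ) :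
    ∑ s, chainDist P x t s = 1 := by
  induction t with
  | zero => simp [chainDist]
  | succ t ih =>
    simp only [chainDist_succ_apply]
    rw [sum_comm]
    simp only [← mul_sum, hP, mul_one, ih]

lemma sum_mul_chainDist_of_stationary {π : S → ℝ} (hπ : ∀ s, ∑ a, π a * P a s = π s)
    (t : ℕ) (s : S) : ∑ y, π y * chainDist P y t s = π s := by
  induction t generalizing s with
  | zero => simp [chainDist]
  | succ t ih =>
    simp only [chainDist_succ_apply, mul_sum]
    rw [sum_comm]
    simp only [← mul_assoc, ← sum_mul, ih, hπ]

lemma sum_fiber_chainDist {T : Type*} [Fintype T] [DecidableEq T] (Q : T → T → ℝ) (g : T → S)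
    (hQ : ∀ b a, ∑ b' with g b' = a, Q b b' = P (g b) a) (y : T) (t : ℕ) (a : S) :
    ∑ b with g b = a, chainDist Q y t b = chainDist P (g y) t a := by
  induction t generalizing a with
  | zero => simp [chainDist, eq_comm]
  | succ t ih =>
    calc ∑ b with g b = a, chainDist Q y (t + 1) b
        = ∑ b', chainDist Q y t b' * P (g b') a := by
          simp only [chainDist_succ_apply]
          rw [sum_comm]
          simp only [← mul_sum, hQ]
      _ = ∑ a', (∑ b' with g b' = a', chainDist Q y t b') * P a' a := by
          rw [← sum_fiberwise univ g]
          refine sum_congr rfl fun a' _ => ?_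
          rw [sum_mul]
          exact sum_congr rfl fun b' hb' => by rw [(mem_filter.1 hb').2]
      _ = chainDist P (g y) (t + 1) a := by simp only [ih]; rfl

omit [DecidableEq S] in
lemma tvDist_le_one {μ ν : S → ℝ} (hμ : ∀ s, 0 ≤ μ s) (hν : ∀ s, 0 ≤ ν s)
    (hμ1 : ∑ s, μ s = 1) (hν1 : ∑ s, ν s = 1) : tvDist μ ν ≤ 1 := by
  have : ∑ s, |μ s - ν s| ≤ ∑ s, (μ s + ν s) :=
    sum_le_sum fun s _ => abs_sub_le_iff.2 ⟨by linarith [hν s], by linarith [hμ s]⟩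
  rw [sum_add_distrib, hμ1, hν1] at this
  unfold tvDist
  linarith

lemma tvDist_le_sum_offDiag {μ₁ μ₂ : S → ℝ} {ν : S × S → ℝ} (hν : ∀ p, 0 ≤ ν p)
    (h₁ : ∀ a, ∑ p with p.1 = a, ν p = μ₁ a) (h₂ : ∀ a, ∑ p with p.2 = a, ν p = μ₂ a) :
    tvDist μ₁ μ₂ ≤ ∑ p ∈ univ.offDiag, ν p := by
  have hdiag_le : ∀ (g : S × S → S) a, g (a, a) = a → ν (a, a) ≤ ∑ p with g p = a, ν p :=
    fun g a h => single_le_sum (fun p _ => hν p) (mem_filter.2 ⟨mem_univ _, h⟩)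
  have hpoint : ∀ a, |μ₁ a - μ₂ a| ≤
      (∑ p with p.1 = a, ν p - ν (a, a)) + (∑ p with p.2 = a, ν p - ν (a, a)) := by
    intro a
    rw [← h₁, ← h₂, abs_sub_le_iff]
    have := hdiag_le Prod.fst a rfl
    have := hdiag_le Prod.snd a rfl
    constructor <;> linarith
  have hsplit : ∑ p ∈ univ.diag, ν p + ∑ p ∈ univ.offDiag, ν p = ∑ p, ν p := by
    rw [← sum_union (disjoint_diag_offDiag univ), diag_union_offDiag, univ_product_univ]
  have hsum := sum_le_sum fun a (_ : a ∈ univ) => hpoint a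
  simp only [sum_add_distrib, sum_sub_distrib, sum_fiberwise] at hsum
  rw [sum_diag] at hsplit
  unfold tvDist
  linarith

variable {P} in
/-- By stationarity `π` is the mixture `∑ y, π y • chainDist P y t`; use convexity. -/
lemma tvDist_le_of_stationary {π : S → ℝ} {B : ℝ}
    (hπ0 : ∀ s, 0 ≤ π s) (hπ1 : ∑ s, π s = 1) (hπ : ∀ s, ∑ a, π a * P a s = π s)
    {x : S} {t : ℕ} (hB : ∀ y, tvDist (chainDist P x t) (chainDist P y t) ≤ B) :
    tvDist (chainDist P x t) π ≤ B := by
  have hpoint : ∀ s, |chainDist P x t s - π s| ≤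
      ∑ y, π y * |chainDist P x t s - chainDist P y t s| := by
    intro s
    calc |chainDist P x t s - π s|
        = |∑ y, π y * (chainDist P x t s - chainDist P y t s)| := by
          simp only [mul_sub, sum_sub_distrib, ← sum_mul, hπ1, one_mul,
            sum_mul_chainDist_of_stationary P hπ]
      _ ≤ ∑ y, π y * |chainDist P x t s - chainDist P y t s| := by
          refine (abs_sum_le_sum_abs _ _).trans_eq (sum_congr rfl fun y _ => ?_)
          rw [abs_mul, abs_of_nonneg (hπ0 y)]
  calc tvDist (chainDist P x t) π
      ≤ 1 / 2 * ∑ s, ∑ y, π y * |chainDist P x t s - chainDist P y t s| := by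
        unfold tvDist; gcongr with s; exact hpoint s
    _ = ∑ y, π y * tvDist (chainDist P x t) (chainDist P y t) := by
        simp only [tvDist, mul_sum]
        rw [sum_comm]
        exact sum_congr rfl fun y _ => sum_congr rfl fun s _ => by ring
    _ ≤ ∑ y, π y * B := sum_le_sum fun y _ => mul_le_mul_of_nonneg_left (hB y) (hπ0 y)
    _ = B := by rw [← sum_mul, hπ1, one_mul]

variable {P} in
theorem tvDist_chainDist_le_of_coupling {Q : S × S → S × S → ℝ} (hQ : ∀ p p', 0 ≤ Q p p')
    (hQ₁ : ∀ p a, ∑ p' with p'.1 = a, Q p p' = P p.1 a)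
    (hQ₂ : ∀ p a, ∑ p' with p'.2 = a, Q p p' = P p.2 a)
    {D : S × S → ℝ} {δ c : ℝ} (hD : ∀ p, 0 ≤ D p) (hδ : 0 < δ)
    (hDδ : ∀ p ∈ univ.offDiag, δ ≤ D p) (hc : 0 ≤ c)
    (hQD : ∀ p, ∑ p', Q p p' * D p' ≤ c * D p) (x y : S) (t : ℕ) :
    tvDist (chainDist P x t) (chainDist P y t) ≤ c ^ t * D (x, y) / δ := by
  set ν := chainDist Q (x, y) t
  have hν : ∀ p, 0 ≤ ν p := chainDist_nonneg Q hQ (x, y) t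
  calc tvDist (chainDist P x t) (chainDist P y t)
      ≤ ∑ p ∈ univ.offDiag, ν p :=
        tvDist_le_sum_offDiag hν (sum_fiber_chainDist P Q Prod.fst hQ₁ (x, y) t)
          (sum_fiber_chainDist P Q Prod.snd hQ₂ (x, y) t)
    _ ≤ ∑ p ∈ univ.offDiag, ν p * D p / δ := sum_le_sum fun p hp => by
        rw [mul_div_assoc]
        exact le_mul_of_one_le_right (hν p) ((one_le_div hδ).2 (hDδ p hp))
    _ ≤ (∑ p, ν p * D p) / δ := by
        rw [← sum_div]
        exact div_le_div_of_nonneg_right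
          (sum_le_univ_sum_of_nonneg fun p => mul_nonneg (hν p) (hD p)) hδ.le
    _ ≤ c ^ t * D (x, y) / δ := by
        gcongr
        exact sum_chainDist_mul_le_pow Q hQ hc hQD (x, y) t

variable {P} in
lemma mixTime_le {π : S → ℝ} {states : Finset S} {N : ℕ}
    (h : ∀ x ∈ states, tvDist (chainDist P x N) π ≤ 1 / Real.exp 1) :
    mixTime P π states ≤ N :=
  Finset.sup_le fun x hx => Nat.sInf_le (h x hx)

end MarkovChain

lemma one_sub_pow_ceil_mul_le {c A : ℝ} (hc0 : 0 < c) (hc1 : c ≤ 1) (hA : 0 < A) :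
    (1 - c) ^ ⌈c⁻¹ * Real.log (A * Real.exp 1)⌉₊ * A ≤ 1 / Real.exp 1 := by
  set N := ⌈c⁻¹ * Real.log (A * Real.exp 1)⌉₊
  have hN : Real.log A + 1 ≤ c * N := by
    have hlog : Real.log (A * Real.exp 1) = Real.log A + 1 := by
      rw [Real.log_mul hA.ne' (Real.exp_pos 1).ne', Real.log_exp]
    calc Real.log A + 1 = c * (c⁻¹ * Real.log (A * Real.exp 1)) := by rw [hlog]; field_simp
      _ ≤ c * N := mul_le_mul_of_nonneg_left (Nat.le_ceil _) hc0.le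
  calc (1 - c) ^ N * A ≤ Real.exp (-c) ^ N * A := by
        gcongr
        linarith [Real.add_one_le_exp (-c)]
    _ = Real.exp (-(c * N) + Real.log A) := by
        rw [← Real.exp_nat_mul, Real.exp_add, Real.exp_log hA]; ring_nf
    _ ≤ Real.exp (-1) := Real.exp_le_exp.2 (by linarith)
    _ = 1 / Real.exp 1 := by rw [Real.exp_neg, one_div]

section RandomMap

variable {Ω S : Type*} [Fintype Ω] [DecidableEq S] (w : Ω → ℝ)

noncomputable def randomMapKernel (Φ : S → Ω → S) (a a' : S) : ℝ :=
  ∑ ω with Φ a ω = a', w ω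

lemma randomMapKernel_nonneg (hw : ∀ ω, 0 ≤ w ω) (Φ : S → Ω → S) (a a' : S) :
    0 ≤ randomMapKernel w Φ a a' :=
  sum_nonneg fun ω _ => hw ω

lemma sum_randomMapKernel_mul [Fintype S] (Φ : S → Ω → S) (D : S → ℝ) (a : S) :
    ∑ a', randomMapKernel w Φ a a' * D a' = ∑ ω, w ω * D (Φ a ω) := by
  rw [← sum_fiberwise univ (Φ a)]
  refine sum_congr rfl fun a' _ => ?_
  rw [randomMapKernel, sum_mul]
  exact sum_congr rfl fun ω hω => by rw [(mem_filter.1 hω).2]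

lemma sum_fiber_randomMapKernel [Fintype S] {T : Type*} [Fintype T] [DecidableEq T] (Φ : S → Ω → S)
    (Ψ : T → Ω → T) (g : T → S) (hg : ∀ b ω, g (Ψ b ω) = Φ (g b) ω) (b : T) (a : S) :
    ∑ b' with g b' = a, randomMapKernel w Ψ b b' = randomMapKernel w Φ (g b) a := by
  calc ∑ b' with g b' = a, randomMapKernel w Ψ b b'
      = ∑ b', randomMapKernel w Ψ b b' * if g b' = a then 1 else 0 := by
        rw [sum_filter]; simp_rw [mul_boole]
    _ = randomMapKernel w Φ (g b) a := by
        rw [sum_randomMapKernel_mul]; simp only [hg, mul_boole]; rw [randomMapKernel, sum_filter]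

/-- Running two copies of a random-map chain with the same noise is a coupling; a distance that
this coupling contracts on average bounds the distance between the laws. -/
theorem tvDist_randomMapKernel_le [Fintype S] (hw : ∀ ω, 0 ≤ w ω) {Φ : S → Ω → S} {D : S × S → ℝ}
    {δ c : ℝ} (hD : ∀ p, 0 ≤ D p) (hδ : 0 < δ) (hDδ : ∀ p ∈ univ.offDiag, δ ≤ D p)
    (hc : 0 ≤ c) (hΦD : ∀ p, ∑ ω, w ω * D (Φ p.1 ω, Φ p.2 ω) ≤ c * D p) (x y : S) (t : ℕ) :
    tvDist (chainDist (randomMapKernel w Φ) x t) (chainDist (randomMapKernel w Φ) y t) ≤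
      c ^ t * D (x, y) / δ := by
  let Ψ : S × S → Ω → S × S := fun p ω => (Φ p.1 ω, Φ p.2 ω)
  refine tvDist_chainDist_le_of_coupling (Q := randomMapKernel w Ψ)
    (randomMapKernel_nonneg w hw Ψ) ?_ ?_ hD hδ hDδ hc ?_ x y t
  · exact sum_fiber_randomMapKernel w Φ Ψ Prod.fst fun _ _ => rfl
  · exact sum_fiber_randomMapKernel w Φ Ψ Prod.snd fun _ _ => rfl
  · intro p
    rw [sum_randomMapKernel_mul]
    exact hΦD p

end RandomMap

lemma sum_prod_mul_apply {ι κ R : Type*} [Fintype ι] [DecidableEq ι] [Fintype κ] [CommSemiring R]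
    (g : ι → κ → R) (hg : ∀ i, ∑ k, g i k = 1) (h : κ → R) (i : ι) :
    ∑ c : ι → κ, (∏ j, g j (c j)) * h (c i) = ∑ k, g i k * h k := by
  have hsplit : ∀ c : ι → κ,
      (∏ j, g j (c j)) * h (c i) = ∏ j, g j (c j) * if j = i then h (c j) else 1 := fun c => by
    rw [prod_mul_distrib, prod_ite_eq' univ i (fun j => h (c j)), if_pos (mem_univ i)]
  simp only [hsplit]
  rw [← Fintype.prod_sum (fun j k => g j k * if j = i then h k else 1)]
  rw [prod_eq_single i (fun j _ hj => by simp only [if_neg hj, mul_one, hg]) (by simp)]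
  simp

section PGD

variable (G : SimpleGraph V) [DecidableRel G.Adj] (lam : V → ℝ) (q : Finset V → ℝ)

noncomputable def coinWeight (a : ℝ) (b : Bool) : ℝ :=
  if b then a / (1 + a) else 1 / (1 + a)

/-- One step of the dynamics is `pgdMap G σ (m, c)`, with the noise `(m, c)` distributed as
`noiseWeight`: the decision schedule `m` and independent coins `c v`, the coin deciding whether an
unblocked `v ∈ m` becomes active. -/
noncomputable def noiseWeight (ω : Finset V × (V → Bool)) : ℝ :=
  q ω.1 * ∏ v, coinWeight (lam v) (ω.2 v)

def pgdUpdate (σ m : Finset V) (b : Bool) (v : V) : Prop :=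
  if v ∈ m then b = true ∧ ¬ ∃ w ∈ σ, G.Adj v w else v ∈ σ

instance (σ m : Finset V) (b : Bool) (v : V) : Decidable (pgdUpdate G σ m b v) := by
  unfold pgdUpdate; infer_instance

def pgdMap (σ : Finset V) (ω : Finset V × (V → Bool)) : Finset V :=
  {v | pgdUpdate G σ ω.1 (ω.2 v) v}

noncomputable def drift (f : V → ℝ) (v : V) : ℝ :=
  qVert q v * f v - ∑ w ∈ G.neighborFinset v, qVert q w * (lam w / (1 + lam w)) * f w

omit [Fintype V] in
def wDist (f : V → ℝ) (p : Finset V × Finset V) : ℝ :=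
  ∑ v ∈ p.1 ∆ p.2, f v

variable {lam q}

lemma coinWeight_nonneg {a : ℝ} (ha : 0 ≤ a) (b : Bool) : 0 ≤ coinWeight a b := by
  unfold coinWeight
  split_ifs <;> positivity

lemma sum_coinWeight {a : ℝ} (ha : 0 ≤ a) : ∑ b, coinWeight a b = 1 := by
  simp only [Fintype.sum_bool, coinWeight, if_true, Bool.false_eq_true, if_false]
  rw [← add_div, add_comm a, div_self (by positivity)]

omit [DecidableEq V] in
lemma noiseWeight_nonneg (hlam : ∀ v, 0 ≤ lam v) (hq0 : ∀ m, 0 ≤ q m) (ω) :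
    0 ≤ noiseWeight lam q ω :=
  mul_nonneg (hq0 _) (prod_nonneg fun v _ => coinWeight_nonneg (hlam v) _)

omit [Fintype V] in
lemma stepFactor_eq_sum_coinWeight (hlam : ∀ v, 0 ≤ lam v) (σ m σ' : Finset V) (v : V) :
    stepFactor G lam σ m σ' v = ∑ b, coinWeight (lam v) b *
      if (v ∈ σ' ↔ pgdUpdate G σ m b v) then 1 else 0 := by
  have := sum_coinWeight (hlam v)
  simp only [Fintype.sum_bool, coinWeight, if_true, Bool.false_eq_true, if_false, one_div,
    pgdUpdate] at this ⊢
  by_cases hm : v ∈ m <;> by_cases hb : ∃ w ∈ σ, G.Adj v w <;> by_cases hσ : v ∈ σ <;>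
    by_cases hσ' : v ∈ σ' <;> simp [stepFactor, hm, hb, hσ, hσ', this]

lemma sum_noiseWeight (hlam : ∀ v, 0 ≤ lam v) (hq : ∑ m, q m = 1) :
    ∑ ω, noiseWeight lam q ω = 1 := by
  simp only [noiseWeight, Fintype.sum_prod_type, ← mul_sum,
    ← Fintype.prod_sum (fun v b => coinWeight (lam v) b), sum_coinWeight (hlam _), prod_const_one,
    mul_one, hq]

lemma pgdP_eq_randomMapKernel (hlam : ∀ v, 0 ≤ lam v) :
    pgdP G lam q = randomMapKernel (noiseWeight lam q) (pgdMap G) := by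
  ext σ σ'
  simp only [randomMapKernel, sum_filter, Fintype.sum_prod_type, pgdP, noiseWeight]
  refine sum_congr rfl fun m _ => ?_
  have hmap : ∀ c : V → Bool, (if pgdMap G σ (m, c) = σ' then (1 : ℝ) else 0) =
      ∏ v, if (v ∈ σ' ↔ pgdUpdate G σ m (c v) v) then 1 else 0 := fun c => by
    rw [prod_boole]
    simp only [Finset.ext_iff, pgdMap, mem_filter, mem_univ, true_and, iff_comm, forall_const]
  calc q m * ∏ v, stepFactor G lam σ m σ' v
      = q m * ∑ c : V → Bool, ∏ v, coinWeight (lam v) (c v) *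
          if (v ∈ σ' ↔ pgdUpdate G σ m (c v) v) then 1 else 0 := by
        simp only [stepFactor_eq_sum_coinWeight G hlam, Fintype.prod_sum]
    _ = _ := by
        refine (mul_sum _ _ _).trans (sum_congr rfl fun c _ => ?_)
        rw [prod_mul_distrib, ← hmap, ← mul_assoc, mul_boole]

lemma pgdP_nonneg (hlam : ∀ v, 0 ≤ lam v) (hq0 : ∀ m, 0 ≤ q m) (σ σ' : Finset V) :
    0 ≤ pgdP G lam q σ σ' := by
  rw [pgdP_eq_randomMapKernel G hlam]
  exact randomMapKernel_nonneg _ (noiseWeight_nonneg hlam hq0) _ _ _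

lemma sum_pgdP (hlam : ∀ v, 0 ≤ lam v) (hq : ∑ m, q m = 1) (σ : Finset V) :
    ∑ σ', pgdP G lam q σ σ' = 1 := by
  simpa [pgdP_eq_randomMapKernel G hlam, sum_noiseWeight hlam hq] using
    sum_randomMapKernel_mul (noiseWeight lam q) (pgdMap G) (fun _ => 1) σ

lemma sum_mul_ite_mem (hq : ∑ m, q m = 1) (v : V) (A B : ℝ) :
    ∑ m, q m * (if v ∈ m then A else B) = qVert q v * A + (1 - qVert q v) * B := by
  have hsplit := sum_filter_add_sum_filter_not univ (fun m => v ∈ m) q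
  have hcompl : 1 - qVert q v = ∑ m with v ∉ m, q m := by rw [qVert]; linarith
  rw [hcompl, qVert, sum_mul, sum_mul, ← sum_filter_add_sum_filter_not univ (fun m => v ∈ m)]
  congr 1 <;> refine sum_congr rfl fun m hm => ?_ <;> simp [(mem_filter.1 hm).2]

lemma sum_noiseWeight_mul_mem_symmDiff (hlam : ∀ v, 0 ≤ lam v) (hq : ∑ m, q m = 1)
    (σ τ : Finset V) (v : V) :
    ∑ ω, noiseWeight lam q ω * (if v ∈ pgdMap G σ ω ∆ pgdMap G τ ω then 1 else 0) =
      qVert q v * coinWeight (lam v) true *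
          (if (∃ w ∈ σ, G.Adj v w) ↔ (∃ w ∈ τ, G.Adj v w) then 0 else 1) +
        (1 - qVert q v) * (if v ∈ σ ∆ τ then 1 else 0) := by
  have hstep : ∀ m, ∑ c : V → Bool, q m * ((∏ u, coinWeight (lam u) (c u)) *
      (if v ∈ pgdMap G σ (m, c) ∆ pgdMap G τ (m, c) then 1 else 0)) =
      q m * if v ∈ m then coinWeight (lam v) true *
          (if (∃ w ∈ σ, G.Adj v w) ↔ (∃ w ∈ τ, G.Adj v w) then 0 else 1)
        else (if v ∈ σ ∆ τ then 1 else 0) := by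
    intro m
    have hmem : ∀ c : V → Bool, v ∈ pgdMap G σ (m, c) ∆ pgdMap G τ (m, c) ↔
        ¬ (pgdUpdate G σ m (c v) v ↔ pgdUpdate G τ m (c v) v) := fun c => by
      simp only [mem_symmDiff, pgdMap, mem_filter, mem_univ, true_and]
      tauto
    simp only [← mul_sum, hmem]
    rw [sum_prod_mul_apply (fun u b => coinWeight (lam u) b) (fun u => sum_coinWeight (hlam u))
      (fun b => if ¬ (pgdUpdate G σ m b v ↔ pgdUpdate G τ m b v) then 1 else 0) v]
    have h1 := sum_coinWeight (hlam v)
    rw [Fintype.sum_bool] at h1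
    by_cases hm : v ∈ m
    · by_cases hσ : ∃ w ∈ σ, G.Adj v w <;> by_cases hτ : ∃ w ∈ τ, G.Adj v w <;>
        simp [pgdUpdate, hm, hσ, hτ]
    · by_cases hσ : v ∈ σ <;> by_cases hτ : v ∈ τ <;>
        simp [pgdUpdate, hm, hσ, hτ, mem_symmDiff, h1]
  simp only [noiseWeight, Fintype.sum_prod_type, mul_assoc, hstep, sum_mul_ite_mem hq]

lemma ite_exists_adj_iff_le_sum_neighborFinset (σ τ : Finset V) (v : V) :
    (if (∃ w ∈ σ, G.Adj v w) ↔ (∃ w ∈ τ, G.Adj v w) then 0 else 1 : ℝ) ≤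
      ∑ w ∈ G.neighborFinset v, if w ∈ σ ∆ τ then 1 else 0 := by
  split_ifs with h
  · exact sum_nonneg fun w _ => by positivity
  · obtain ⟨w, hwA, hvw⟩ : ∃ w ∈ σ ∆ τ, G.Adj v w := by
      by_contra! h'
      refine h ⟨fun ⟨w, hw, hvw⟩ => ⟨w, ?_, hvw⟩, fun ⟨w, hw, hvw⟩ => ⟨w, ?_, hvw⟩⟩ <;>
        by_contra hw' <;> exact h' w (mem_symmDiff.2 (by tauto)) hvw
    calc (1 : ℝ) = if w ∈ σ ∆ τ then 1 else 0 := (if_pos hwA).symm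
      _ ≤ _ := single_le_sum (f := fun w => if w ∈ σ ∆ τ then (1 : ℝ) else 0)
          (fun w _ => by positivity) ((G.mem_neighborFinset v w).2 hvw)

lemma sum_mul_sum_neighborFinset_ite (a : V → ℝ) (A : Finset V) :
    ∑ v, a v * ∑ w ∈ G.neighborFinset v, (if w ∈ A then 1 else 0) =
      ∑ w ∈ A, ∑ v ∈ G.neighborFinset w, a v := by
  simp only [mul_sum, mul_boole]
  rw [sum_comm' (t' := univ) (s' := fun w => G.neighborFinset w) (fun v w => by
    simp [SimpleGraph.mem_neighborFinset, G.adj_comm])]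
  simp only [sum_ite_irrel, sum_const_zero, sum_ite_mem, univ_inter]

lemma sum_noiseWeight_mul_wDist (hlam : ∀ v, 0 ≤ lam v) (hq : ∑ m, q m = 1) (f : V → ℝ)
    (σ τ : Finset V) :
    ∑ ω, noiseWeight lam q ω * wDist f (pgdMap G σ ω, pgdMap G τ ω) =
      ∑ v, f v * (qVert q v * coinWeight (lam v) true *
          (if (∃ w ∈ σ, G.Adj v w) ↔ (∃ w ∈ τ, G.Adj v w) then 0 else 1) +
            (1 - qVert q v) * (if v ∈ σ ∆ τ then 1 else 0)) := by
  have hwDist : ∀ σ' τ' : Finset V, wDist f (σ', τ') = ∑ v, f v * if v ∈ σ' ∆ τ' then 1 else 0 :=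
    fun σ' τ' => by simp only [wDist, mul_boole, sum_ite_mem, univ_inter]
  simp only [hwDist, mul_sum, ← sum_noiseWeight_mul_mem_symmDiff G hlam hq]
  rw [sum_comm]
  exact sum_congr rfl fun v _ => sum_congr rfl fun ω _ => by ring

lemma sum_mul_qVert_add_eq_sum_sub_drift (f : V → ℝ) (A : Finset V) :
    ∑ v, f v * (qVert q v * coinWeight (lam v) true *
        (∑ w ∈ G.neighborFinset v, if w ∈ A then 1 else 0) +
          (1 - qVert q v) * (if v ∈ A then 1 else 0)) =
      ∑ w ∈ A, (f w - drift G lam q f w) := by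
  have hexpand : ∀ v, f v * (qVert q v * coinWeight (lam v) true *
      (∑ w ∈ G.neighborFinset v, if w ∈ A then 1 else 0) +
        (1 - qVert q v) * (if v ∈ A then 1 else 0)) =
      qVert q v * (lam v / (1 + lam v)) * f v *
          (∑ w ∈ G.neighborFinset v, if w ∈ A then 1 else 0) +
        if v ∈ A then f v * (1 - qVert q v) else 0 := fun v => by
    rw [coinWeight, if_pos rfl]
    split_ifs <;> ring
  rw [sum_congr rfl fun v _ => hexpand v, sum_add_distrib, sum_mul_sum_neighborFinset_ite,
    sum_ite_mem, univ_inter, ← sum_add_distrib]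
  refine sum_congr rfl fun w _ => ?_
  rw [drift]
  ring

lemma sum_noiseWeight_mul_wDist_le (hlam : ∀ v, 0 ≤ lam v) (hq0 : ∀ m, 0 ≤ q m)
    (hq : ∑ m, q m = 1) {f : V → ℝ} (hf : ∀ v, 0 ≤ f v) {M θ : ℝ} (hM : 0 < M)
    (hfM : ∀ v, f v ≤ M) (hθ : 0 ≤ θ) (hθf : ∀ v, θ ≤ drift G lam q f v) (σ τ : Finset V) :
    ∑ ω, noiseWeight lam q ω * wDist f (pgdMap G σ ω, pgdMap G τ ω) ≤
      (1 - θ / M) * wDist f (σ, τ) := by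
  have hqv : ∀ v, 0 ≤ qVert q v := fun v => sum_nonneg fun m _ => hq0 m
  calc ∑ ω, noiseWeight lam q ω * wDist f (pgdMap G σ ω, pgdMap G τ ω)
      ≤ ∑ v, f v * (qVert q v * coinWeight (lam v) true *
          (∑ w ∈ G.neighborFinset v, if w ∈ σ ∆ τ then 1 else 0) +
            (1 - qVert q v) * (if v ∈ σ ∆ τ then 1 else 0)) := by
        rw [sum_noiseWeight_mul_wDist G hlam hq]
        gcongr with v
        · exact hf v
        · exact mul_nonneg (hqv v) (coinWeight_nonneg (hlam v) true)
        · exact ite_exists_adj_iff_le_sum_neighborFinset G σ τ v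
    _ = ∑ w ∈ σ ∆ τ, (f w - drift G lam q f w) := sum_mul_qVert_add_eq_sum_sub_drift G f _
    _ ≤ ∑ w ∈ σ ∆ τ, (1 - θ / M) * f w := sum_le_sum fun w _ => by
        have h1 : θ * f w / M ≤ θ := by
          rw [div_le_iff₀ hM]; exact mul_le_mul_of_nonneg_left (hfM w) hθ
        have h2 : (1 - θ / M) * f w = f w - θ * f w / M := by ring
        linarith [hθf w]
    _ = (1 - θ / M) * wDist f (σ, τ) := (mul_sum _ _ _).symm

omit [Fintype V] [DecidableEq V] in
lemma exists_adj_iff_of_agree {m σ σ' : Finset V} (hm : IsInd G m)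
    (hagree : ∀ w ∉ m, (w ∈ σ ↔ w ∈ σ')) {v : V} (hv : v ∈ m) :
    (∃ w ∈ σ, G.Adj v w) ↔ (∃ w ∈ σ', G.Adj v w) := by
  have hw : ∀ w, G.Adj v w → w ∉ m := fun w hvw hw => hm v hv w hw hvw
  exact ⟨fun ⟨w, hwσ, hvw⟩ => ⟨w, (hagree w (hw w hvw)).1 hwσ, hvw⟩,
    fun ⟨w, hwσ, hvw⟩ => ⟨w, (hagree w (hw w hvw)).2 hwσ, hvw⟩⟩

omit [Fintype V] in
lemma stepFactor_detailed_balance (hlam : ∀ v, 0 ≤ lam v) {m σ σ' : Finset V} (hσ : IsInd G σ)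
    (hσ' : IsInd G σ') (hm : IsInd G m) (hagree : ∀ w ∉ m, (w ∈ σ ↔ w ∈ σ')) (v : V) :
    (if v ∈ σ then lam v else 1) * stepFactor G lam σ m σ' v =
      (if v ∈ σ' then lam v else 1) * stepFactor G lam σ' m σ v := by
  have : 1 + lam v ≠ 0 := by linarith [hlam v]
  by_cases hv : v ∈ m
  · have hiff := exists_adj_iff_of_agree G hm hagree hv
    by_cases hb : ∃ w ∈ σ, G.Adj v w
    · have hvσ : v ∉ σ := fun h => by obtain ⟨w, hw, hvw⟩ := hb; exact hσ v h w hw hvw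
      have hvσ' : v ∉ σ' := fun h => by obtain ⟨w, hw, hvw⟩ := hiff.1 hb; exact hσ' v h w hw hvw
      simp [stepFactor, hv, hb, hiff.1 hb, hvσ, hvσ']
    · have hb' : ¬ ∃ w ∈ σ', G.Adj v w := fun h => hb (hiff.2 h)
      by_cases h₁ : v ∈ σ <;> by_cases h₂ : v ∈ σ' <;> simp [stepFactor, hv, hb, hb', h₁, h₂] <;>
        field_simp
  · by_cases h₁ : v ∈ σ <;> by_cases h₂ : v ∈ σ' <;> simp [stepFactor, hv, h₁, h₂]

omit [Fintype V] in
lemma isInd_of_stepFactor_ne_zero {m σ σ' : Finset V} (hσ : IsInd G σ) (hm : IsInd G m)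
    (hne : ∀ v, stepFactor G lam σ m σ' v ≠ 0) : IsInd G σ' := by
  have hkeep : ∀ v ∉ m, (v ∈ σ' ↔ v ∈ σ) := fun v hv => by
    by_contra h; exact hne v (by simp [stepFactor, hv, h])
  have hblock : ∀ v ∈ m, (∃ w ∈ σ, G.Adj v w) → v ∉ σ' := fun v hv hb h =>
    hne v (by simp [stepFactor, hv, hb, h])
  intro u hu w hw huw
  by_cases hum : u ∈ m <;> by_cases hwm : w ∈ m
  · exact hm u hum w hwm huw
  · exact hblock u hum ⟨w, (hkeep w hwm).1 hw, huw⟩ hu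
  · exact hblock w hwm ⟨u, (hkeep u hum).1 hu, huw.symm⟩ hw
  · exact hσ u ((hkeep u hum).1 hu) w ((hkeep w hwm).1 hw) huw

lemma prod_mul_prod_stepFactor_comm (hlam : ∀ v, 0 ≤ lam v) {m σ σ' : Finset V}
    (hσ : IsInd G σ) (hσ' : IsInd G σ') (hm : IsInd G m) :
    (∏ v ∈ σ, lam v) * ∏ v, stepFactor G lam σ m σ' v =
      (∏ v ∈ σ', lam v) * ∏ v, stepFactor G lam σ' m σ v := by
  by_cases hagree : ∀ w ∉ m, (w ∈ σ ↔ w ∈ σ')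
  · rw [← Fintype.prod_ite_mem σ, ← Fintype.prod_ite_mem σ', ← prod_mul_distrib,
      ← prod_mul_distrib]
    exact prod_congr rfl fun v _ => stepFactor_detailed_balance G hlam hσ hσ' hm hagree v
  · obtain ⟨v, hv⟩ := not_forall.1 hagree
    obtain ⟨hvm, hv⟩ := Classical.not_imp.1 hv
    have hzero : ∀ {s t : Finset V}, ¬ (v ∈ t ↔ v ∈ s) → stepFactor G lam s m t v = 0 :=
      fun h => by simp only [stepFactor, if_neg hvm, if_neg h]
    rw [prod_eq_zero (mem_univ v) (hzero (mt Iff.symm hv)), prod_eq_zero (mem_univ v) (hzero hv),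
      mul_zero, mul_zero]

lemma sum_isInd_prod_pos (hlam : ∀ v, 0 ≤ lam v) :
    0 < ∑ σ with IsInd G σ, ∏ v ∈ σ, lam v :=
  lt_of_lt_of_le (by simp) (single_le_sum (f := fun σ => ∏ v ∈ σ, lam v)
    (fun σ _ => prod_nonneg fun v _ => hlam v) (mem_filter.2 ⟨mem_univ ∅, by simp [IsInd]⟩))

lemma prodForm_nonneg (hlam : ∀ v, 0 ≤ lam v) (σ : Finset V) : 0 ≤ prodForm G lam σ := by
  unfold prodForm
  split_ifs
  · exact div_nonneg (prod_nonneg fun v _ => hlam v) (sum_isInd_prod_pos G hlam).le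
  · exact le_rfl

lemma sum_prodForm (hlam : ∀ v, 0 ≤ lam v) : ∑ σ, prodForm G lam σ = 1 := by
  unfold prodForm
  rw [← sum_filter, ← sum_div, div_self (sum_isInd_prod_pos G hlam).ne']

lemma prodForm_mul_prod_stepFactor_comm (hlam : ∀ v, 0 ≤ lam v) {m : Finset V} (hm : IsInd G m)
    (σ σ' : Finset V) :
    prodForm G lam σ * ∏ v, stepFactor G lam σ m σ' v =
      prodForm G lam σ' * ∏ v, stepFactor G lam σ' m σ v := by
  have hzero : ∀ {s t : Finset V}, IsInd G s → ¬ IsInd G t → ∏ v, stepFactor G lam s m t v = 0 :=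
    fun hs ht => by
      by_contra h
      exact ht (isInd_of_stepFactor_ne_zero G hs hm fun v => (prod_ne_zero_iff.1 h) v (mem_univ v))
  unfold prodForm
  by_cases hσ : IsInd G σ <;> by_cases hσ' : IsInd G σ' <;>
    simp only [hσ, hσ', if_true, if_false, zero_mul]
  · rw [div_mul_eq_mul_div, div_mul_eq_mul_div, prod_mul_prod_stepFactor_comm G hlam hσ hσ' hm]
  · rw [hzero hσ hσ', mul_zero]
  · rw [hzero hσ' hσ, mul_zero]

lemma prodForm_stationary (hlam : ∀ v, 0 ≤ lam v) (hqsupp : ∀ m, ¬ IsInd G m → q m = 0)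
    (hq : ∑ m, q m = 1) (σ' : Finset V) :
    ∑ σ, prodForm G lam σ * pgdP G lam q σ σ' = prodForm G lam σ' := by
  have hbalance : ∀ σ, prodForm G lam σ * pgdP G lam q σ σ' =
      prodForm G lam σ' * pgdP G lam q σ' σ := fun σ => by
    simp only [pgdP, mul_sum]
    refine sum_congr rfl fun m _ => ?_
    by_cases hm : IsInd G m
    · rw [mul_left_comm, prodForm_mul_prod_stepFactor_comm G hlam hm, mul_left_comm]
    · simp [hqsupp m hm]
  rw [sum_congr rfl fun σ _ => hbalance σ, ← mul_sum, sum_pgdP G hlam hq, mul_one]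

omit [Fintype V] in
lemma wDist_nonneg {f : V → ℝ} (hf : ∀ v, 0 ≤ f v) (p : Finset V × Finset V) : 0 ≤ wDist f p :=
  sum_nonneg fun v _ => hf v

lemma le_wDist_of_mem_offDiag {f : V → ℝ} {m : ℝ} (hf : ∀ v, 0 ≤ f v) (hfm : ∀ v, m ≤ f v)
    {p : Finset V × Finset V} (hp : p ∈ univ.offDiag) : m ≤ wDist f p := by
  obtain ⟨v, hv⟩ := symmDiff_nonempty.2 (mem_offDiag.1 hp).2.2
  exact (hfm v).trans (single_le_sum (fun w _ => hf w) hv)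

lemma wDist_le_card_mul {f : V → ℝ} {M : ℝ} (hf : ∀ v, 0 ≤ f v) (hfM : ∀ v, f v ≤ M)
    (p : Finset V × Finset V) : wDist f p ≤ Fintype.card V * M := by
  calc wDist f p ≤ ∑ v, f v := sum_le_sum_of_subset_of_nonneg (subset_univ _) fun v _ _ => hf v
    _ ≤ Fintype.card V * M := by
        simpa using sum_le_card_nsmul univ f M fun v _ => hfM v

theorem tvDist_chainDist_pgdP_le (hlam : ∀ v, 0 ≤ lam v) (hq0 : ∀ m, 0 ≤ q m)
    (hqsupp : ∀ m, ¬ IsInd G m → q m = 0) (hq : ∑ m, q m = 1) {f : V → ℝ} {m M θ : ℝ}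
    (hm : 0 < m) (hfm : ∀ v, m ≤ f v) (hfM : ∀ v, f v ≤ M) (hM : 0 < M) (hθ : 0 ≤ θ)
    (hθM : θ ≤ M) (hθf : ∀ v, θ ≤ drift G lam q f v) (x : Finset V) (t : ℕ) :
    tvDist (chainDist (pgdP G lam q) x t) (prodForm G lam) ≤
      (1 - θ / M) ^ t * (Fintype.card V * (M / m)) := by
  have hf : ∀ v, 0 ≤ f v := fun v => hm.le.trans (hfm v)
  have hc : 0 ≤ 1 - θ / M := sub_nonneg.2 ((div_le_one hM).2 hθM)
  have hπ := prodForm_stationary G hlam hqsupp hq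
  rw [pgdP_eq_randomMapKernel G hlam] at hπ ⊢
  refine tvDist_le_of_stationary (prodForm_nonneg G hlam) (sum_prodForm G hlam) hπ fun y => ?_
  calc _ ≤ (1 - θ / M) ^ t * wDist f (x, y) / m :=
        tvDist_randomMapKernel_le _ (noiseWeight_nonneg hlam hq0) (wDist_nonneg hf) hm
          (fun p hp => le_wDist_of_mem_offDiag hf hfm hp) hc
          (fun p => sum_noiseWeight_mul_wDist_le G hlam hq0 hq hf hM hfM hθ hθf p.1 p.2) x y t
    _ ≤ (1 - θ / M) ^ t * (Fintype.card V * M) / m := by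
        gcongr; exact wDist_le_card_mul hf hfM _
    _ = (1 - θ / M) ^ t * (Fintype.card V * (M / m)) := by ring

lemma qVert_le_one (hq0 : ∀ m, 0 ≤ q m) (hq : ∑ m, q m = 1) (v : V) :
    qVert q v ≤ 1 :=
  hq ▸ sum_le_sum_of_subset_of_nonneg (filter_subset _ _) fun m _ _ => hq0 m

lemma drift_le {f : V → ℝ} (hlam : ∀ v, 0 ≤ lam v) (hq0 : ∀ m, 0 ≤ q m) (hq : ∑ m, q m = 1)
    (hf : ∀ v, 0 ≤ f v) (v : V) : drift G lam q f v ≤ f v := by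
  have hqv : ∀ w, 0 ≤ qVert q w := fun w => sum_nonneg fun m _ => hq0 m
  have hsum : 0 ≤ ∑ w ∈ G.neighborFinset v, qVert q w * (lam w / (1 + lam w)) * f w :=
    sum_nonneg fun w _ => by have := hlam w; have := hqv w; have := hf w; positivity
  have := mul_le_of_le_one_left (hf v) (qVert_le_one hq0 hq v)
  unfold drift
  linarith

end PGD

theorem pgd_fast_mixing_general
    {V : Type*} [Fintype V] [DecidableEq V] [Nonempty V]
    (G : SimpleGraph V) [DecidableRel G.Adj]
    (lam : V → ℝ) (hlam : ∀ v, 0 < lam v)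
    (q : Finset V → ℝ)
    (hq0 : ∀ m, 0 ≤ q m)
    (hqsupp : ∀ m, ¬ IsInd G m → q m = 0)
    (hqsum : ∑ m : Finset V, q m = 1)
    (f : V → ℝ) (hf : ∀ v, 0 < f v)
    (m M ξ θ : ℝ)
    (hm : m = univ.inf' univ_nonempty f)
    (hM : M = univ.sup' univ_nonempty f)
    (hξ : ξ = M / m)
    (hθ : θ = univ.inf' univ_nonempty (fun v =>
      qVert q v * f v -
        ∑ w ∈ G.neighborFinset v, qVert q w * (lam w / (1 + lam w)) * f w))
    (hθpos : 0 < θ) :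
    (∀ x ∈ univ.filter (fun s => IsInd G s), ∀ t : ℕ,
      tvDist (chainDist (pgdP G lam q) x t) (prodForm G lam) ≤
        min 1 ((1 - θ / M) ^ t * ((Fintype.card V : ℝ) * ξ))) ∧
    mixTime (pgdP G lam q) (prodForm G lam) (univ.filter (fun s => IsInd G s)) ≤
      ⌈(M / θ) * Real.log ((Fintype.card V : ℝ) * ξ * Real.exp 1)⌉₊ := by
  obtain ⟨v₀⟩ := ‹Nonempty V›
  have hlam' : ∀ v, 0 ≤ lam v := fun v => (hlam v).le
  have hfm : ∀ v, m ≤ f v := fun v => hm ▸ inf'_le f (mem_univ v)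
  have hfM : ∀ v, f v ≤ M := fun v => hM ▸ le_sup' f (mem_univ v)
  have hmpos : 0 < m := by
    obtain ⟨v, -, hv⟩ := exists_mem_eq_inf' univ_nonempty f
    exact hm ▸ hv ▸ hf v
  have hθf : ∀ v, θ ≤ drift G lam q f v := fun v => hθ ▸ inf'_le _ (mem_univ v)
  have hθM : θ ≤ M :=
    (hθf v₀).trans ((drift_le G hlam' hq0 hqsum (fun v => (hf v).le) v₀).trans (hfM v₀))
  have hMpos : 0 < M := hθpos.trans_le hθM
  have hbound : ∀ x t, tvDist (chainDist (pgdP G lam q) x t) (prodForm G lam) ≤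
      (1 - θ / M) ^ t * (Fintype.card V * ξ) := fun x t => hξ ▸
    tvDist_chainDist_pgdP_le G hlam' hq0 hqsupp hqsum hmpos hfm hfM hMpos hθpos.le hθM hθf x t
  have hA : 0 < (Fintype.card V : ℝ) * ξ := by rw [hξ]; positivity
  refine ⟨fun x _ t => le_min ?_ (hbound x t), mixTime_le fun x _ => (hbound x _).trans ?_⟩
  · exact tvDist_le_one (chainDist_nonneg _ (pgdP_nonneg G hlam' hq0) x t) (prodForm_nonneg G hlam')
      (sum_chainDist _ (sum_pgdP G hlam' hqsum) x t) (sum_prodForm G hlam')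
  · simpa only [inv_div] using
      one_sub_pow_ceil_mul_le (div_pos hθpos hMpos) ((div_le_one hMpos).2 hθM) hA

/-- Theorem 2 of the paper: for any positive weight function `f`,
with `m = min f`, `M = max f`, `ξ = M/m`, if
`θ = min_v (q_v f(v) - Σ_{w ∈ N_v} q_w (λ_w/(1+λ_w)) f(w)) > 0`, then the variation
distance decays geometrically and `T_mix ≤ ⌈(M/θ) log(nξe)⌉`. -/
theorem pgd_fast_mixing
    {V : Type*} [Fintype V] [DecidableEq V] [Nonempty V]
    (G : SimpleGraph V) [DecidableRel G.Adj]
    (lam : V → ℝ) (hlam : ∀ v, 0 < lam v)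
    (q : Finset V → ℝ)
    (hq0 : ∀ m, 0 ≤ q m)
    (hqsupp : ∀ m, ¬ IsInd G m → q m = 0)
    (hqsum : ∑ m : Finset V, q m = 1)
    (hqv : ∀ v, 0 < qVert q v)
    (f : V → ℝ) (hf : ∀ v, 0 < f v)
    (m M ξ θ : ℝ)
    (hm : m = univ.inf' univ_nonempty f)
    (hM : M = univ.sup' univ_nonempty f)
    (hξ : ξ = M / m)
    (hθ : θ = univ.inf' univ_nonempty (fun v =>
      qVert q v * f v -
        ∑ w ∈ G.neighborFinset v, qVert q w * (lam w / (1 + lam w)) * f w))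
    (hθpos : 0 < θ) :
    (∀ x ∈ univ.filter (fun s => IsInd G s), ∀ t : ℕ,
      tvDist (chainDist (pgdP G lam q) x t) (prodForm G lam) ≤
        min 1 ((1 - θ / M) ^ t * ((Fintype.card V : ℝ) * ξ))) ∧
    mixTime (pgdP G lam q) (prodForm G lam) (univ.filter (fun s => IsInd G s)) ≤
      ⌈(M / θ) * Real.log ((Fintype.card V : ℝ) * ξ * Real.exp 1)⌉₊ :=
  pgd_fast_mixing_general G lam hlam q hq0 hqsupp hqsum f hf m M ξ θ hm hM hξ hθ hθpos
end

section
/- Let σ and η be feasible schedules that differ only at a single vertex v (say σ_v = 0, η_v = 1, so Φ(σ,η) = f(v)). Run one coupled step of the parallel Glauber dynamics from (σ,η): sample a single decision schedule m ∈ 𝓘 with probability q_m, and for each vertex one independent uniform coin, and apply the PGD update rule to both σ and η using the same m and the same coins (in particular, a vertex whose activation is decided in both chains uses the same coin, so it activates in both or in neither when both are allowed to activate). Then the resulting coupled pair (σ',η') satisfies E[Φ(σ',η')] − Φ(σ,η) ≤ −q_v f(v) + Σ_{w∈N_v} q_w (λ_w/(1+λ_w)) f(w), where Φ(σ,η) =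 Σ_{u : σ_u ≠ η_u} f(u) for a positive weight function f on V. -/
open Finset

variable {V : Type*} [Fintype V] [DecidableEq V]

/-- The next schedule under the PGD update rule, given the current schedule `σ`,
the decision schedule `m`, and the activation coins `c` (vertex `v` activates
when its coin `c v` is `true` and it is allowed to). -/
def coupledNext (G : SimpleGraph V) [DecidableRel G.Adj]
    (σ m : Finset V) (c : V → Bool) : Finset V :=
  univ.filter (fun v =>
    (v ∈ m ∧ ¬ (∃ w ∈ σ, G.Adj v w) ∧ c v = true) ∨ (v ∉ m ∧ v ∈ σ))

/-- Probability of a configuration of independent activation coins, where coin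
`v` is `true` with probability `λ_v/(1+λ_v)`. -/
noncomputable def coinProb (lam : V → ℝ) (c : V → Bool) : ℝ :=
  ∏ v : V, (if c v then lam v / (1 + lam v) else 1 / (1 + lam v))

/-- Weighted Hamming distance `Φ(σ,η) = Σ_{u ∈ σ Δ η} f(u)` between schedules. -/
def wHamming (f : V → ℝ) (σ η : Finset V) : ℝ :=
  ∑ u ∈ symmDiff σ η, f u

/-! Under the shared decision schedule `m` and coins `c`, every vertex outside `N_v` sees the
same neighbourhood status in both chains. Hence after one step the chains can disagree only at
`v`, when `v ∉ m` keeps the old disagreement (probability `1 - q_v`), and at neighbours `w ∈ m`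
of `v` whose coin says "activate" (probability `q_w λ_w/(1+λ_w)`). Taking expectations of this
pointwise bound and subtracting `Φ(σ,η) = f(v)` gives the claim. -/

section Coins

variable (lam : V → ℝ)

omit [DecidableEq V] in
lemma coinProb_nonneg (hlam : ∀ v, 0 ≤ lam v) (c : V → Bool) : 0 ≤ coinProb lam c :=
  prod_nonneg fun v _ => by
    have h₁ : 0 < 1 + lam v := by linarith [hlam v]
    split
    · exact div_nonneg (hlam v) h₁.le
    · exact div_nonneg zero_le_one h₁.le

lemma sum_coinProb (hlam : ∀ v, 1 + lam v ≠ 0) : ∑ c : V → Bool, coinProb lam c = 1 := by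
  unfold coinProb
  rw [← Fintype.prod_sum fun v (b : Bool) => if b then lam v / (1 + lam v) else 1 / (1 + lam v)]
  refine prod_eq_one fun v _ => ?_
  simp only [Fintype.sum_bool, if_true, Bool.false_eq_true, if_false]
  rw [← add_div, add_comm, div_self (hlam v)]

lemma sum_coinProb_mul_ite (hlam : ∀ v, 1 + lam v ≠ 0) (w : V) :
    ∑ c : V → Bool, coinProb lam c * (if c w then 1 else 0) = lam w / (1 + lam w) := by
  have hsplit : ∀ c : V → Bool, coinProb lam c * (if c w then 1 else 0) =
      ∏ v, (if c v then lam v / (1 + lam v) else 1 / (1 + lam v)) *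
        (if v = w then (if c v then 1 else 0) else 1) := by
    intro c
    rw [prod_mul_distrib, prod_ite_eq' univ w, if_pos (mem_univ w), coinProb]
  simp_rw [hsplit]
  rw [← Fintype.prod_sum fun v (b : Bool) => (if b then lam v / (1 + lam v) else 1 / (1 + lam v)) *
        (if v = w then (if b then 1 else 0) else 1)]
  calc _ = ∏ v, if v = w then lam v / (1 + lam v) else 1 := prod_congr rfl fun v _ => ?_
    _ = _ := by rw [prod_ite_eq' univ w, if_pos (mem_univ w)]
  by_cases hvw : v = w
  · simp [hvw]
  · simp only [Fintype.sum_bool, if_true, Bool.false_eq_true, if_false, hvw, mul_one]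
    rw [← add_div, add_comm, div_self (hlam v)]

end Coins

section Expectation

variable (q : Finset V → ℝ) (lam : V → ℝ)

noncomputable def coupledExp (h : Finset V → (V → Bool) → ℝ) : ℝ :=
  ∑ m, ∑ c, q m * coinProb lam c * h m c

variable {q lam}

lemma coupledExp_mono (hq : ∀ m, 0 ≤ q m) (hlam : ∀ v, 0 ≤ lam v)
    {h h' : Finset V → (V → Bool) → ℝ} (hle : ∀ m c, h m c ≤ h' m c) :
    coupledExp q lam h ≤ coupledExp q lam h' :=
  sum_le_sum fun m _ => sum_le_sum fun c _ =>
    mul_le_mul_of_nonneg_left (hle m c) (mul_nonneg (hq m) (coinProb_nonneg lam hlam c))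

lemma coupledExp_add (h₁ h₂ : Finset V → (V → Bool) → ℝ) :
    coupledExp q lam (fun m c => h₁ m c + h₂ m c) =
      coupledExp q lam h₁ + coupledExp q lam h₂ := by
  simp only [coupledExp, mul_add, sum_add_distrib]

lemma coupledExp_sum {ι : Type*} (s : Finset ι) (h : ι → Finset V → (V → Bool) → ℝ) :
    coupledExp q lam (fun m c => ∑ i ∈ s, h i m c) = ∑ i ∈ s, coupledExp q lam (h i) := by
  simp only [coupledExp, mul_sum]
  calc _ = ∑ m, ∑ i ∈ s, ∑ c, q m * coinProb lam c * h i m c := sum_congr rfl fun m _ => sum_comm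
    _ = _ := sum_comm

lemma coupledExp_of_decision (hlam : ∀ v, 1 + lam v ≠ 0) (g : Finset V → ℝ) :
    coupledExp q lam (fun m _ => g m) = ∑ m, q m * g m := by
  simp only [coupledExp, mul_right_comm (q _) (coinProb lam _), ← mul_sum, sum_coinProb lam hlam,
    mul_one]

lemma coupledExp_ite_notMem (hlam : ∀ v, 1 + lam v ≠ 0) (hq : ∑ m, q m = 1) (v : V) (a : ℝ) :
    coupledExp q lam (fun m _ => if v ∉ m then a else 0) = (1 - qVert q v) * a := by
  rw [coupledExp_of_decision hlam, qVert, sum_filter, ← hq, ← sum_sub_distrib, sum_mul]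
  exact sum_congr rfl fun m _ => by split_ifs <;> ring

lemma coupledExp_ite_mem_and (hlam : ∀ v, 1 + lam v ≠ 0) (w : V) (a : ℝ) :
    coupledExp q lam (fun m c => if w ∈ m ∧ c w then a else 0) =
      qVert q w * (lam w / (1 + lam w)) * a := by
  have hsplit : ∀ (m : Finset V) (c : V → Bool),
      q m * coinProb lam c * (if w ∈ m ∧ c w then a else 0) =
        (if w ∈ m then q m else 0) * a * (coinProb lam c * if c w then 1 else 0) := by
    intro m c
    by_cases hw : w ∈ m <;> cases c w <;> simp [hw, mul_right_comm]
  simp only [coupledExp, hsplit, ← mul_sum, sum_coinProb_mul_ite lam hlam, ← sum_mul,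
    ← sum_filter, qVert]
  ring

end Expectation

section Coupling

variable (G : SimpleGraph V) [DecidableRel G.Adj]

lemma wHamming_insert_self (f : V → ℝ) {σ : Finset V} {v : V} (hv : v ∉ σ) :
    wHamming f σ (insert v σ) = f v := by
  rw [wHamming, symmDiff_of_le (subset_insert v σ), insert_sdiff_cancel hv, sum_singleton]

lemma symmDiff_coupledNext_insert_subset (σ m : Finset V) (c : V → Bool) (v : V) :
    symmDiff (coupledNext G σ m c) (coupledNext G (insert v σ) m c) ⊆
      ({v} \ m) ∪ (G.neighborFinset v ∩ m).filter (fun w => c w) := by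
  intro u hu
  simp only [mem_symmDiff, coupledNext, mem_filter, mem_univ, true_and, mem_insert,
    exists_eq_or_imp] at hu
  simp only [mem_union, mem_sdiff, mem_singleton, mem_filter, mem_inter,
    SimpleGraph.mem_neighborFinset]
  by_cases hu_m : u ∈ m
  · have hadj : G.Adj u v := by
      by_contra hadj
      simp only [hadj, false_or] at hu
      tauto
    exact Or.inr ⟨⟨hadj.symm, hu_m⟩, by tauto⟩
  · tauto

lemma wHamming_coupledNext_insert_le (f : V → ℝ) (hf : ∀ u, 0 ≤ f u)
    (σ m : Finset V) (c : V → Bool) (v : V) :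
    wHamming f (coupledNext G σ m c) (coupledNext G (insert v σ) m c) ≤
      (if v ∉ m then f v else 0) +
        ∑ w ∈ G.neighborFinset v, if w ∈ m ∧ c w then f w else 0 := by
  calc wHamming f (coupledNext G σ m c) (coupledNext G (insert v σ) m c)
      ≤ ∑ u ∈ ({v} \ m) ∪ (G.neighborFinset v ∩ m).filter (fun w => c w), f u :=
        sum_le_sum_of_subset_of_nonneg (symmDiff_coupledNext_insert_subset G σ m c v)
          fun u _ _ => hf u
    _ ≤ ∑ u ∈ {v} \ m, f u + ∑ u ∈ (G.neighborFinset v ∩ m).filter (fun w => c w), f u := by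
        rw [← sum_union_inter]
        exact le_add_of_nonneg_right (sum_nonneg fun u _ => hf u)
    _ = _ := by
        rw [sdiff_eq_filter, sum_filter, sum_singleton, sum_filter, ← sum_ite_mem]
        simp only [ite_and]

end Coupling

theorem pgd_coupling_one_step_general
    {V : Type*} [Fintype V] [DecidableEq V]
    (G : SimpleGraph V) [DecidableRel G.Adj]
    (lam : V → ℝ) (hlam : ∀ v, 0 < lam v)
    (q : Finset V → ℝ)
    (hq0 : ∀ m, 0 ≤ q m)
    (hqsum : ∑ m : Finset V, q m = 1)
    (f : V → ℝ) (hf : ∀ v, 0 < f v)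
    (σ η : Finset V) (v : V)
    (hv : v ∉ σ) (hην : η = insert v σ) :
    (∑ m : Finset V, ∑ c : V → Bool,
        q m * coinProb lam c *
          wHamming f (coupledNext G σ m c) (coupledNext G η m c))
      - wHamming f σ η ≤
    - qVert q v * f v +
      ∑ w ∈ G.neighborFinset v, qVert q w * (lam w / (1 + lam w)) * f w := by
  subst hην
  have hlam₀ : ∀ v, 0 ≤ lam v := fun v => (hlam v).le
  have hlam₁ : ∀ v, 1 + lam v ≠ 0 := fun v => (by linarith [hlam v] : 0 < 1 + lam v).ne'
  have hbound := coupledExp_mono hq0 hlam₀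
    (wHamming_coupledNext_insert_le G f (fun u => (hf u).le) σ · · v)
  rw [coupledExp_add, coupledExp_ite_notMem hlam₁ hqsum, coupledExp_sum] at hbound
  simp only [coupledExp_ite_mem_and hlam₁] at hbound
  rw [wHamming_insert_self f hv]
  change coupledExp q lam _ - f v ≤ _
  linarith

/-- Lemma 1 of the paper: one coupled step of the parallel
Glauber dynamics from two feasible schedules differing only at `v` contracts the
expected weighted Hamming distance:
`E[Φ(σ',η')] - Φ(σ,η) ≤ -q_v f(v) + Σ_{w∈N_v} q_w (λ_w/(1+λ_w)) f(w)`. -/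
theorem pgd_coupling_one_step
    {V : Type*} [Fintype V] [DecidableEq V]
    (G : SimpleGraph V) [DecidableRel G.Adj]
    (lam : V → ℝ) (hlam : ∀ v, 0 < lam v)
    (q : Finset V → ℝ)
    (hq0 : ∀ m, 0 ≤ q m)
    (hqsupp : ∀ m, ¬ IsInd G m → q m = 0)
    (hqsum : ∑ m : Finset V, q m = 1)
    (f : V → ℝ) (hf : ∀ v, 0 < f v)
    (σ η : Finset V) (v : V)
    (hσ : IsInd G σ) (hη : IsInd G η)
    (hv : v ∉ σ) (hην : η = insert v σ) :
    (∑ m : Finset V, ∑ c : V → Bool,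
        q m * coinProb lam c *
          wHamming f (coupledNext G σ m c) (coupledNext G η m c))
      - wHamming f σ η ≤
    - qVert q v * f v +
      ∑ w ∈ G.neighborFinset v, qVert q w * (lam w / (1 + lam w)) * f w :=
  pgd_coupling_one_step_general G lam hlam q hq0 hqsum f hf σ η v hv hην
end
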